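/- For α ∈ [0, 1/2) and W > 0, the function W ↦ E[X_W^α], where X_W ~ IG(1/W, 1), is nonincreasing in W. -/

import Mathlib

open MeasureTheory Set

/-- Density of the inverse Gaussian distribution IG(μ, λ). -/
noncomputable def igPdf (μ lam x : ℝ) : ℝ :=
  Real.sqrt (lam / (2 * Real.pi * x ^ 3)) *
    Real.exp (-(lam * (x - μ) ^ 2) / (2 * μ ^ 2 * x))

/-!
With `E(W, x) = exp (-(W x - 1)² / (2x))`, the moment is `(2π)^{-1/2} ∫₀^∞ x^{α-3/2} E(W, x) dx`.
Differentiating under the integral sign, its derivative in `W` is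
`-(2π)^{-1/2} ∫₀^∞ x^{α-3/2} (W x - 1) E(W, x) dx`. The involution `x ↦ 1/(W² x)` of `(0, ∞)`
fixes `E(W, ·)`, so this integral is half the integral of the symmetrised integrand, which in
terms of `y = W x` is a positive multiple of `(y - 1) (y^{α-3/2} - y^{-α-3/2}) ≥ 0` for `α ≥ 0`.
-/

open Real
open scoped Nat

lemma sub_one_mul_rpow_sub_rpow_nonneg {y p q : ℝ} (hy : 0 < y) (hpq : p ≤ q) :
    0 ≤ (y - 1) * (y ^ q - y ^ p) := by
  rcases le_total 1 y with h | h
  · exact mul_nonneg (by linarith) (by linarith [rpow_le_rpow_of_exponent_le h hpq])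
  · exact mul_nonneg_of_nonpos_of_nonpos (by linarith)
      (by linarith [rpow_le_rpow_of_exponent_ge hy h hpq])

lemma exp_neg_div_le_factorial_mul_pow {b x : ℝ} (hb : 0 < b) (hx : 0 < x) (n : ℕ) :
    exp (-(b / x)) ≤ n ! / b ^ n * x ^ n := by
  rw [exp_neg, ← one_div, div_le_iff₀ (exp_pos _)]
  calc (1 : ℝ) = n ! / b ^ n * x ^ n * ((b / x) ^ n / n !) := by rw [div_pow]; field_simp
    _ ≤ n ! / b ^ n * x ^ n * exp (b / x) := by
      gcongr; exact pow_div_factorial_le_exp _ (div_pos hb hx).le n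

lemma integrableOn_rpow_mul_exp_neg_mul_sub_div (β : ℝ) {a b : ℝ} (ha : 0 < a) (hb : 0 < b) :
    IntegrableOn (fun x => x ^ β * exp (-(a * x) - b / x)) (Ioi 0) := by
  obtain ⟨n, hn⟩ := exists_nat_gt (-1 - β)
  have hmajorant : IntegrableOn (fun x => n ! / b ^ n * (x ^ (β + n) * exp (-a * x ^ (1 : ℝ))))
      (Ioi 0) :=
    (integrableOn_rpow_mul_exp_neg_mul_rpow (by linarith) one_pos ha).const_mul _
  refine hmajorant.mono' (by fun_prop) ?_
  filter_upwards [ae_restrict_mem measurableSet_Ioi] with x (hx : 0 < x)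
  rw [norm_of_nonneg (by positivity), rpow_one, rpow_add_natCast hx.ne', sub_eq_add_neg,
    exp_add, neg_mul]
  calc x ^ β * (exp (-(a * x)) * exp (-(b / x)))
      ≤ x ^ β * (exp (-(a * x)) * (n ! / b ^ n * x ^ n)) := by
        gcongr; exact exp_neg_div_le_factorial_mul_pow hb hx n
    _ = _ := by ring

section InvSubstitution

variable {c : ℝ}

lemma image_const_div_Ioi_zero (hc : 0 < c) : (fun x => c / x) '' Ioi 0 = Ioi 0 := by
  ext y
  refine ⟨?_, fun (hy : 0 < y) => ⟨c / y, div_pos hc hy, by field_simp⟩⟩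
  rintro ⟨x, hx : 0 < x, rfl⟩
  exact div_pos hc hx

lemma injOn_const_div_Ioi_zero (hc : 0 < c) : InjOn (fun x => c / x) (Ioi 0) :=
  fun _ _ _ _ h =>
    inv_injective ((mul_right_inj' hc.ne').mp (by simpa only [div_eq_mul_inv] using h))

lemma hasDerivWithinAt_const_div {x : ℝ} (hx : x ≠ 0) (s : Set ℝ) :
    HasDerivWithinAt (fun x => c / x) (-(c / x ^ 2)) s x := by
  simpa [div_eq_mul_inv, mul_neg] using ((hasDerivAt_inv hx).const_mul c).hasDerivWithinAt

variable (f : ℝ → ℝ)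

lemma integrableOn_Ioi_comp_const_div_iff (hc : 0 < c) :
    IntegrableOn (fun x => c / x ^ 2 * f (c / x)) (Ioi 0) ↔ IntegrableOn f (Ioi 0) := by
  have := integrableOn_image_iff_integrableOn_abs_deriv_smul measurableSet_Ioi
    (fun x (hx : 0 < x) => hasDerivWithinAt_const_div (c := c) hx.ne' _)
    (injOn_const_div_Ioi_zero hc) f
  rw [image_const_div_Ioi_zero hc] at this
  rw [this]
  refine integrableOn_congr_fun (fun x (hx : 0 < x) => ?_) measurableSet_Ioi
  rw [smul_eq_mul, abs_neg, abs_of_pos (by positivity)]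

lemma integral_Ioi_comp_const_div (hc : 0 < c) :
    ∫ x in Ioi 0, c / x ^ 2 * f (c / x) = ∫ x in Ioi 0, f x := by
  have := integral_image_eq_integral_abs_deriv_smul measurableSet_Ioi
    (fun x (hx : 0 < x) => hasDerivWithinAt_const_div (c := c) hx.ne' _)
    (injOn_const_div_Ioi_zero hc) f
  rw [image_const_div_Ioi_zero hc] at this
  rw [this]
  refine setIntegral_congr_fun measurableSet_Ioi (fun x (hx : 0 < x) => ?_)
  rw [smul_eq_mul, abs_neg, abs_of_pos (by positivity)]

lemma setIntegral_Ioi_nonneg_of_add_comp_const_div_nonneg {f} (hc : 0 < c)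
    (hf : IntegrableOn f (Ioi 0)) (h : ∀ x, 0 < x → 0 ≤ f x + c / x ^ 2 * f (c / x)) :
    0 ≤ ∫ x in Ioi 0, f x := by
  have hsum : 2 * ∫ x in Ioi 0, f x = ∫ x in Ioi 0, (f x + c / x ^ 2 * f (c / x)) := by
    rw [integral_add hf ((integrableOn_Ioi_comp_const_div_iff f hc).2 hf),
      integral_Ioi_comp_const_div f hc, two_mul]
  have : 0 ≤ ∫ x in Ioi 0, (f x + c / x ^ 2 * f (c / x)) :=
    setIntegral_nonneg measurableSet_Ioi h
  linarith

end InvSubstitution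

noncomputable def igKernel (W x : ℝ) : ℝ := exp (-(W * x - 1) ^ 2 / (2 * x))

lemma igKernel_pos (W x : ℝ) : 0 < igKernel W x := exp_pos _

lemma igKernel_eq_exp_mul_exp {W x : ℝ} (hx : x ≠ 0) :
    igKernel W x = exp W * exp (-(W ^ 2 / 2 * x) - 1 / 2 / x) := by
  rw [igKernel, ← exp_add]; congr 1; field_simp; ring

lemma igKernel_inv_sq_div {W x : ℝ} (hW : W ≠ 0) (hx : x ≠ 0) :
    igKernel W ((W ^ 2)⁻¹ / x) = igKernel W x := by
  rw [igKernel, igKernel]; congr 1; field_simp; ring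

lemma igKernel_le {a b W x : ℝ} (ha : 0 < a) (haW : a ≤ W) (hWb : W ≤ b) (hx : 0 < x) :
    igKernel W x ≤ exp b * exp (-(a ^ 2 / 2 * x) - 1 / 2 / x) := by
  rw [igKernel_eq_exp_mul_exp hx.ne']
  gcongr

lemma hasDerivAt_igKernel {x : ℝ} (hx : x ≠ 0) (W : ℝ) :
    HasDerivAt (fun W => igKernel W x) (-((W * x - 1) * igKernel W x)) W := by
  have h : HasDerivAt (fun W => W * x - 1) x W := by
    simpa using ((hasDerivAt_id W).mul_const x).sub_const 1
  convert ((h.fun_pow 2).fun_neg.div_const (2 * x)).exp using 1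
  · rfl
  · unfold igKernel
    field_simp
    ring

@[fun_prop]
lemma measurable_igKernel (W : ℝ) : Measurable (igKernel W) := by
  unfold igKernel; fun_prop

noncomputable def igDerivBound (β a b x : ℝ) : ℝ :=
  exp b * (b * (x ^ (β + 1) * exp (-(a ^ 2 / 2 * x) - 1 / 2 / x)) +
    x ^ β * exp (-(a ^ 2 / 2 * x) - 1 / 2 / x))

lemma integrableOn_igDerivBound (β : ℝ) {a : ℝ} (ha : 0 < a) (b : ℝ) :
    IntegrableOn (igDerivBound β a b) (Ioi 0) :=
  (((integrableOn_rpow_mul_exp_neg_mul_sub_div _ (by positivity) one_half_pos).const_mul b).add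
    (integrableOn_rpow_mul_exp_neg_mul_sub_div _ (by positivity) one_half_pos)).const_mul _

lemma norm_rpow_mul_sub_one_mul_igKernel_le {β a b W x : ℝ} (ha : 0 < a) (haW : a ≤ W)
    (hWb : W ≤ b) (hx : 0 < x) :
    ‖x ^ β * ((W * x - 1) * igKernel W x)‖ ≤ igDerivBound β a b x := by
  have hlin : |W * x - 1| ≤ b * x + 1 := abs_le.2 ⟨by nlinarith, by nlinarith⟩
  rw [norm_mul, norm_mul, norm_of_nonneg (by positivity), norm_of_nonneg (igKernel_pos W x).le,
    Real.norm_eq_abs, igDerivBound, rpow_add_one hx.ne']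
  calc x ^ β * (|W * x - 1| * igKernel W x)
      ≤ x ^ β * ((b * x + 1) * (exp b * exp (-(a ^ 2 / 2 * x) - 1 / 2 / x))) := by
        gcongr
        exacts [(igKernel_pos W x).le, (abs_nonneg _).trans hlin, igKernel_le ha haW hWb hx]
    _ = _ := by ring

lemma integrableOn_rpow_mul_igKernel (β : ℝ) {W : ℝ} (hW : 0 < W) :
    IntegrableOn (fun x => x ^ β * igKernel W x) (Ioi 0) := by
  refine IntegrableOn.congr_fun ((integrableOn_rpow_mul_exp_neg_mul_sub_div β
    (a := W ^ 2 / 2) (by positivity) one_half_pos).const_mul (exp W))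
    (fun x (hx : 0 < x) => ?_) measurableSet_Ioi
  rw [igKernel_eq_exp_mul_exp hx.ne']
  ring

lemma integrableOn_rpow_mul_sub_one_mul_igKernel (β : ℝ) {W : ℝ} (hW : 0 < W) :
    IntegrableOn (fun x => x ^ β * ((W * x - 1) * igKernel W x)) (Ioi 0) := by
  refine (integrableOn_igDerivBound β hW W).mono' (by fun_prop) ?_
  filter_upwards [ae_restrict_mem measurableSet_Ioi] with x hx
  exact norm_rpow_mul_sub_one_mul_igKernel_le hW le_rfl le_rfl hx

lemma rpow_mul_sub_one_mul_igKernel_add_comp_nonneg {β W x : ℝ} (hβ : -3 / 2 ≤ β) (hW : 0 < W)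
    (hx : 0 < x) :
    0 ≤ x ^ β * ((W * x - 1) * igKernel W x) + (W ^ 2)⁻¹ / x ^ 2 *
      (((W ^ 2)⁻¹ / x) ^ β * ((W * ((W ^ 2)⁻¹ / x) - 1) * igKernel W ((W ^ 2)⁻¹ / x))) := by
  set y := W * x with hy
  have hy0 : 0 < y := mul_pos hW hx
  have hyβ : y ^ β = W ^ β * x ^ β := mul_rpow hW.le hx.le
  have hdual : ((W ^ 2)⁻¹ / x) ^ β = (W ^ β * y ^ β)⁻¹ := by
    rw [show (W ^ 2)⁻¹ / x = (W * y)⁻¹ by rw [hy]; field_simp, inv_rpow (by positivity),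
      mul_rpow hW.le hy0.le]
  have hyβ' : y ^ (-β - 3) = (y ^ β)⁻¹ / y ^ 3 := by
    rw [rpow_sub hy0, rpow_neg hy0.le, show (3 : ℝ) = (3 : ℕ) by norm_num, rpow_natCast]
  have hfactor := mul_nonneg
    (mul_nonneg (inv_nonneg.2 (rpow_nonneg hW.le β)) (igKernel_pos W x).le)
    (sub_one_mul_rpow_sub_rpow_nonneg hy0 (by linarith : -β - 3 ≤ β))
  refine hfactor.trans_eq ?_
  rw [igKernel_inv_sq_div hW.ne' hx.ne', hdual, hyβ', hyβ, hy]
  have := (rpow_pos_of_pos hW β).ne'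
  have := (rpow_pos_of_pos hx β).ne'
  field_simp
  ring

lemma integral_rpow_mul_sub_one_mul_igKernel_nonneg {β W : ℝ} (hβ : -3 / 2 ≤ β) (hW : 0 < W) :
    0 ≤ ∫ x in Ioi 0, x ^ β * ((W * x - 1) * igKernel W x) :=
  setIntegral_Ioi_nonneg_of_add_comp_const_div_nonneg (by positivity)
    (integrableOn_rpow_mul_sub_one_mul_igKernel β hW) fun _ hx =>
      rpow_mul_sub_one_mul_igKernel_add_comp_nonneg hβ hW hx

lemma hasDerivAt_integral_rpow_mul_igKernel (β : ℝ) {W₀ : ℝ} (hW₀ : 0 < W₀) :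
    HasDerivAt (fun W => ∫ x in Ioi 0, x ^ β * igKernel W x)
      (-∫ x in Ioi 0, x ^ β * ((W₀ * x - 1) * igKernel W₀ x)) W₀ := by
  have h_bound : ∀ᵐ x ∂volume.restrict (Ioi 0), ∀ W ∈ Ioo (W₀ / 2) (2 * W₀),
      ‖x ^ β * -((W * x - 1) * igKernel W x)‖ ≤ igDerivBound β (W₀ / 2) (2 * W₀) x := by
    filter_upwards [ae_restrict_mem measurableSet_Ioi] with x hx W hW
    rw [mul_neg, norm_neg]
    exact norm_rpow_mul_sub_one_mul_igKernel_le (half_pos hW₀) hW.1.le hW.2.le hx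
  have h_diff : ∀ᵐ x ∂volume.restrict (Ioi 0), ∀ W ∈ Ioo (W₀ / 2) (2 * W₀),
      HasDerivAt (fun W => x ^ β * igKernel W x) (x ^ β * -((W * x - 1) * igKernel W x)) W := by
    filter_upwards [ae_restrict_mem measurableSet_Ioi] with x (hx : 0 < x) W _
    exact (hasDerivAt_igKernel hx.ne' W).const_mul _
  obtain ⟨-, h⟩ := hasDerivAt_integral_of_dominated_loc_of_deriv_le
    (F := fun W x => x ^ β * igKernel W x)
    (Ioo_mem_nhds (half_lt_self hW₀) (by linarith : W₀ < 2 * W₀))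
    (.of_forall fun _ => by fun_prop) (integrableOn_rpow_mul_igKernel β hW₀) (by fun_prop) h_bound
    (integrableOn_igDerivBound β (half_pos hW₀) _) h_diff
  simpa only [mul_neg, integral_neg] using h

lemma antitoneOn_integral_rpow_mul_igKernel {β : ℝ} (hβ : -3 / 2 ≤ β) :
    AntitoneOn (fun W => ∫ x in Ioi 0, x ^ β * igKernel W x) (Ioi 0) := by
  have hderiv := fun W (hW : W ∈ Ioi (0 : ℝ)) => hasDerivAt_integral_rpow_mul_igKernel β hW
  refine antitoneOn_of_hasDerivWithinAt_nonpos (convex_Ioi 0)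
    (fun W hW => (hderiv W hW).continuousAt.continuousWithinAt)
    (fun W hW => (hderiv W (interior_subset hW)).hasDerivWithinAt) fun W hW => ?_
  rw [interior_Ioi] at hW
  exact neg_nonpos.2 (integral_rpow_mul_sub_one_mul_igKernel_nonneg hβ hW)

lemma igPdf_inv_one {W x : ℝ} (hW : W ≠ 0) (hx : 0 < x) :
    igPdf W⁻¹ 1 x = (√(2 * π))⁻¹ * (x ^ (-3 / 2 : ℝ) * igKernel W x) := by
  have hsqrt : √(1 / (2 * π * x ^ 3)) = (√(2 * π))⁻¹ * x ^ (-3 / 2 : ℝ) := by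
    rw [one_div, sqrt_inv, sqrt_mul (by positivity), mul_inv, ← rpow_natCast x 3,
      sqrt_eq_rpow (x ^ _), ← rpow_mul hx.le, ← rpow_neg hx.le]
    norm_num
  rw [igPdf, hsqrt, igKernel, mul_assoc]
  congr 3
  field_simp

lemma integral_rpow_mul_igPdf_inv_one (α : ℝ) {W : ℝ} (hW : W ≠ 0) :
    ∫ x in Ioi 0, x ^ α * igPdf W⁻¹ 1 x =
      (√(2 * π))⁻¹ * ∫ x in Ioi 0, x ^ (α - 3 / 2) * igKernel W x := by
  rw [← integral_const_mul]
  refine setIntegral_congr_fun measurableSet_Ioi fun x (hx : 0 < x) => ?_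
  rw [igPdf_inv_one hW hx, sub_eq_add_neg, rpow_add hx]
  ring_nf

theorem ig_moment_antitone_general (α : ℝ) (h0 : 0 ≤ α) :
    AntitoneOn (fun W : ℝ => ∫ x in Ioi (0 : ℝ), x ^ α * igPdf W⁻¹ 1 x)
      (Ioi 0) := by
  intro W₁ (hW₁ : 0 < W₁) W₂ (hW₂ : 0 < W₂) hW
  simp only [integral_rpow_mul_igPdf_inv_one α hW₁.ne', integral_rpow_mul_igPdf_inv_one α hW₂.ne']
  exact mul_le_mul_of_nonneg_left
    (antitoneOn_integral_rpow_mul_igKernel (by linarith : -3 / 2 ≤ α - 3 / 2) hW₁ hW₂ hW)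
    (by positivity)

theorem ig_moment_antitone (α : ℝ) (h0 : 0 ≤ α) (h1 : α < 1 / 2) :
    AntitoneOn (fun W : ℝ => ∫ x in Ioi (0 : ℝ), x ^ α * igPdf W⁻¹ 1 x)
      (Ioi 0) :=
  ig_moment_antitone_general α h0
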